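/- Set Z'' := (max_{s ≤ c_N} J(s)) − G(0), the maximum being attained. Then Z'' < J(c_N). -/

import Mathlib

/-!
Since `c'' ≤ c_N` lies on the increasing branch of `G`, `G c'' ≤ G c_N`. The integral term of `J`
is an `f`-weighted average of `V`, so it is at most `Z + G 0` at `c''` and, as `V ≥ Z` on
`[c_N, ∞)`, at least `Z` at `c_N`. Hence `J c'' - G 0 ≤ J c_N + γ G 0 - G 0 < J c_N`,
the last step because `γ < 1` and `G 0 > 0`.
-/

open MeasureTheory Set Filter

section WeightedAverage

variable {α : Type*} [MeasurableSpace α] {μ : Measure α} {f g : α → ℝ} {b : ℝ}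

theorem integral_mul_le_of_ae_le (hf1 : ∫ x, f x ∂μ = 1) (hf : 0 ≤ᵐ[μ] f)
    (hfg : Integrable (fun x => f x * g x) μ) (hg : ∀ᵐ x ∂μ, g x ≤ b) :
    ∫ x, f x * g x ∂μ ≤ b :=
  calc ∫ x, f x * g x ∂μ ≤ ∫ x, f x * b ∂μ :=
        integral_mono_ae hfg ((Integrable.of_integral_ne_zero (by simp [hf1])).mul_const b)
          (by filter_upwards [hf, hg] with x hfx hgx using mul_le_mul_of_nonneg_left hgx hfx)
    _ = b := by rw [integral_mul_const, hf1, one_mul]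

theorem le_integral_mul_of_ae_le (hf1 : ∫ x, f x ∂μ = 1) (hf : 0 ≤ᵐ[μ] f)
    (hfg : Integrable (fun x => f x * g x) μ) (hg : ∀ᵐ x ∂μ, b ≤ g x) :
    b ≤ ∫ x, f x * g x ∂μ :=
  calc b = ∫ x, f x * b ∂μ := by rw [integral_mul_const, hf1, one_mul]
    _ ≤ ∫ x, f x * g x ∂μ :=
        integral_mono_ae ((Integrable.of_integral_ne_zero (by simp [hf1])).mul_const b) hfg
          (by filter_upwards [hf, hg] with x hfx hgx using mul_le_mul_of_nonneg_left hgx hfx)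

end WeightedAverage

theorem integrableOn_Ioi_mul_comp_const_add {f V : ℝ → ℝ} {s : ℝ}
    (hf : IntegrableOn f (Ioi 0)) (hV : Measurable V)
    (hVub : BddAbove (V '' Ici s)) (hVlb : BddBelow (V '' Ici s)) :
    IntegrableOn (fun x => f x * V (s + x)) (Ioi 0) := by
  obtain ⟨C, hC⟩ := (Metric.isBounded_of_bddAbove_of_bddBelow hVub hVlb).exists_norm_le
  refine hf.mul_bdd (c := C) (hV.comp (measurable_const_add s)).aestronglyMeasurable ?_
  refine ae_restrict_of_forall_mem measurableSet_Ioi fun x hx => hC _ ?_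
  exact mem_image_of_mem V (show s ≤ s + x by linarith [mem_Ioi.1 hx])

theorem stmt_9_general
    (cN : ℝ) (G : ℝ → ℝ)
    (hGinc : StrictMonoOn G (Iic cN))
    (hG0 : 0 < G 0)
    (f : ℝ → ℝ) (γ : ℝ)
    (hfnn : ∀ x, 0 ≤ f x)
    (hf1 : (∫ x in Ioi (0:ℝ), f x) = 1) (hγ : γ ∈ Ioo (0:ℝ) 1)
    (Z θ : ℝ)
    (V : ℝ → ℝ) (hVcont : Continuous V)
    (hVub : ∀ y, V y ≤ Z + G 0)
    (hVlb : ∀ r : ℝ, BddBelow (V '' Ici r))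
    (hVZ : ∀ y, θ ≤ y → V y = Z)
    (hVgt : ∀ y, cN ≤ y → y < θ → Z < V y)
    (J : ℝ → ℝ) (hJ : ∀ s, J s = G s + γ * ∫ x in Ioi (0:ℝ), f x * V (s + x))
    (c'' : ℝ) (hc'' : c'' ∈ Iic cN) :
    J c'' - G 0 < J cN := by
  have hfInt : IntegrableOn f (Ioi 0) := Integrable.of_integral_ne_zero (by simp [hf1])
  have hfae : 0 ≤ᵐ[volume.restrict (Ioi 0)] f := ae_of_all _ hfnn
  have hI (s : ℝ) : IntegrableOn (fun x => f x * V (s + x)) (Ioi 0) :=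
    integrableOn_Ioi_mul_comp_const_add hfInt hVcont.measurable
      ⟨Z + G 0, by rintro _ ⟨y, -, rfl⟩; exact hVub y⟩ (hVlb s)
  have hVge (y : ℝ) (hy : cN ≤ y) : Z ≤ V y := by
    rcases le_or_gt θ y with h | h
    · exact (hVZ y h).ge
    · exact (hVgt y hy h).le
  have hupper : (∫ x in Ioi (0:ℝ), f x * V (c'' + x)) ≤ Z + G 0 :=
    integral_mul_le_of_ae_le hf1 hfae (hI c'') (ae_of_all _ fun _ => hVub _)
  have hlower : Z ≤ ∫ x in Ioi (0:ℝ), f x * V (cN + x) :=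
    le_integral_mul_of_ae_le hf1 hfae (hI cN) <|
      ae_restrict_of_forall_mem measurableSet_Ioi fun x hx => hVge _ (by linarith [mem_Ioi.1 hx])
  have hG : G c'' ≤ G cN := hGinc.monotoneOn hc'' self_mem_Iic hc''
  rw [hJ c'', hJ cN]
  nlinarith [mul_le_mul_of_nonneg_left hupper hγ.1.le, mul_le_mul_of_nonneg_left hlower hγ.1.le,
    mul_lt_mul_of_pos_right hγ.2 hG0]

theorem stmt_9
    (cN t₀ : ℝ) (G : ℝ → ℝ)
    (hcN : cN < 0) (ht₀ : 0 < t₀)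
    (hGcont : ContinuousOn G (Iio t₀))
    (hGinc : StrictMonoOn G (Iic cN))
    (hGdec : StrictAntiOn G (Ico cN t₀))
    (hGtop : Tendsto G (nhdsWithin t₀ (Iio t₀)) atBot)
    (hGbot : Tendsto G atBot atBot)
    (hG0 : 0 < G 0)
    (θN : ℝ) (hθN : θN ∈ Ioo cN t₀) (hGθN : G θN = G cN - G 0)
    (θN' : ℝ) (hθN' : θN' < cN) (hGθN' : G θN' = G cN - G 0)
    (f : ℝ → ℝ) (γ : ℝ)
    (hfm : Measurable f) (hf0 : ∀ x ≤ 0, f x = 0) (hfnn : ∀ x, 0 ≤ f x)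
    (hf1 : (∫ x in Ioi (0:ℝ), f x) = 1) (hγ : γ ∈ Ioo (0:ℝ) 1)
    (hfpos : ∀ᵐ x ∂volume, 0 < x → 0 < f x)
    (Z θ : ℝ) (hθ : θ ∈ Ioc cN θN)
    (V : ℝ → ℝ) (hVcont : Continuous V)
    (hVub : ∀ y, V y ≤ Z + G 0)
    (hVlb : ∀ r : ℝ, BddBelow (V '' Ici r))
    (hVanti : AntitoneOn V (Ici cN))
    (hVZ : ∀ y, θ ≤ y → V y = Z)
    (hVgt : ∀ y, cN ≤ y → y < θ → Z < V y)
    (c' : ℝ) (hc' : c' ∈ Ioc θN' cN) (hVc' : V c' = Z + G 0)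
    (J : ℝ → ℝ) (hJ : ∀ s, J s = G s + γ * ∫ x in Ioi (0:ℝ), f x * V (s + x))
    (c'' : ℝ) (hc'' : c'' ∈ Iic cN)
    (hmax : ∀ s ∈ Iic cN, J s ≤ J c'') :
    J c'' - G 0 < J cN :=
  stmt_9_general cN G hGinc hG0 f γ hfnn hf1 hγ Z θ V hVcont hVub hVlb hVZ hVgt J hJ c'' hc''
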